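/- arXiv:2311.00327 — 2 statements merged into one kernel-verified Lean document; each statement's English description precedes it below -/
import Mathlib

section
/- Let Λ ∈ ℝ^{p×p} be symmetric positive definite, M ∈ ℝ^{p×p} symmetric positive semidefinite, and V := Λ + M. Then for all vectors w, θ ∈ ℝ^p, |wᵀ V⁻¹ Λ θ| ≤ ‖θ‖_Λ · ‖w‖_{V⁻¹}, where ‖x‖_A := √(xᵀAx) for a positive semidefinite matrix A. -/
open Matrix
open scoped MatrixOrder

/-! With `u := V⁻¹ w` and `V = Λ + M`, symmetry of `V⁻¹` turns the left side into `|uᵀ Λ θ|`.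
Cauchy–Schwarz for the semi-inner product `(x, y) ↦ xᵀ Λ y` bounds this by `‖u‖_Λ ‖θ‖_Λ`, and
`Λ ≤ V` in the Loewner order gives `‖u‖_Λ² ≤ uᵀ V u = wᵀ V⁻¹ w`. -/

namespace Matrix

variable {n : Type*} [Fintype n]

theorem PosSemidef.abs_dotProduct_mulVec_le {A : Matrix n n ℝ} (hA : A.PosSemidef)
    (x y : n → ℝ) : |x ⬝ᵥ (A *ᵥ y)| ≤ √(x ⬝ᵥ (A *ᵥ x)) * √(y ⬝ᵥ (A *ᵥ y)) := by
  have hnonneg (z : n → ℝ) : 0 ≤ z ⬝ᵥ (A *ᵥ z) := by simpa using hA.dotProduct_mulVec_nonneg z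
  have hsymm : y ⬝ᵥ (A *ᵥ x) = x ⬝ᵥ (A *ᵥ y) := by
    rw [dotProduct_mulVec, ← mulVec_transpose, ← conjTranspose_eq_transpose_of_trivial,
      hA.isHermitian.eq, dotProduct_comm]
  -- the quadratic `t ↦ (x + t y)ᵀ A (x + t y)` is nonnegative, so its discriminant is not positive
  have hdisc : discrim (y ⬝ᵥ (A *ᵥ y)) (2 * (x ⬝ᵥ (A *ᵥ y))) (x ⬝ᵥ (A *ᵥ x)) ≤ 0 := by
    refine discrim_le_zero fun t => ?_
    have := hnonneg (x + t • y)
    simp only [mulVec_add, mulVec_smul, dotProduct_add, add_dotProduct, dotProduct_smul,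
      smul_dotProduct, hsymm, smul_eq_mul] at this
    linarith
  rw [← Real.sqrt_mul (hnonneg x)]
  refine Real.abs_le_sqrt ?_
  rw [discrim] at hdisc
  linarith

theorem dotProduct_mulVec_le_of_le {A B : Matrix n n ℝ} (hAB : A ≤ B) (x : n → ℝ) :
    x ⬝ᵥ (A *ᵥ x) ≤ x ⬝ᵥ (B *ᵥ x) := by
  have := (le_iff.mp hAB).dotProduct_mulVec_nonneg x
  simp only [star_trivial, sub_mulVec, dotProduct_sub] at this
  linarith

variable [DecidableEq n]

theorem dotProduct_mulVec_inv_mulVec {R : Type*} [CommRing R] {V : Matrix n n R}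
    (hV : IsUnit V.det) (w : n → R) :
    (V⁻¹ *ᵥ w) ⬝ᵥ (V *ᵥ (V⁻¹ *ᵥ w)) = w ⬝ᵥ (V⁻¹ *ᵥ w) := by
  rw [mulVec_mulVec, mul_nonsing_inv V hV, one_mulVec, dotProduct_comm]

theorem abs_dotProduct_inv_mul_mulVec_le {Λ V : Matrix n n ℝ} (hΛ : Λ.PosSemidef)
    (hV : V.PosDef) (hΛV : Λ ≤ V) (w θ : n → ℝ) :
    |w ⬝ᵥ ((V⁻¹ * Λ) *ᵥ θ)| ≤ √(θ ⬝ᵥ (Λ *ᵥ θ)) * √(w ⬝ᵥ (V⁻¹ *ᵥ w)) := by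
  set u := V⁻¹ *ᵥ w
  have hVinv : V⁻¹ᵀ = V⁻¹ := by
    rw [← conjTranspose_eq_transpose_of_trivial, hV.isHermitian.inv.eq]
  have hu : w ⬝ᵥ ((V⁻¹ * Λ) *ᵥ θ) = u ⬝ᵥ (Λ *ᵥ θ) := by
    rw [← mulVec_mulVec, dotProduct_mulVec w, ← mulVec_transpose, hVinv]
  calc |w ⬝ᵥ ((V⁻¹ * Λ) *ᵥ θ)| = |u ⬝ᵥ (Λ *ᵥ θ)| := by rw [hu]
    _ ≤ √(u ⬝ᵥ (Λ *ᵥ u)) * √(θ ⬝ᵥ (Λ *ᵥ θ)) := hΛ.abs_dotProduct_mulVec_le u θ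
    _ ≤ √(u ⬝ᵥ (V *ᵥ u)) * √(θ ⬝ᵥ (Λ *ᵥ θ)) := by
      gcongr
      exact dotProduct_mulVec_le_of_le hΛV u
    _ = √(θ ⬝ᵥ (Λ *ᵥ θ)) * √(w ⬝ᵥ (V⁻¹ *ᵥ w)) := by
      rw [dotProduct_mulVec_inv_mulVec hV.det_pos.ne'.isUnit, mul_comm]

end Matrix

/-- Let `Λ ∈ ℝ^{p×p}` be symmetric positive definite, `M ∈ ℝ^{p×p}` symmetric positive
semidefinite, and `V := Λ + M`. Then for all `w, θ ∈ ℝ^p`,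
`|wᵀ V⁻¹ Λ θ| ≤ ‖θ‖_Λ ⬝ ‖w‖_{V⁻¹}`, where `‖x‖_A := √(xᵀ A x)`. -/
theorem abs_dotProduct_inv_reg_le {p : ℕ} (Λ M : Matrix (Fin p) (Fin p) ℝ)
    (hΛ : Λ.PosDef) (hM : M.PosSemidef) (w θ : Fin p → ℝ) :
    |w ⬝ᵥ (((Λ + M)⁻¹ * Λ) *ᵥ θ)| ≤
      Real.sqrt (θ ⬝ᵥ (Λ *ᵥ θ)) * Real.sqrt (w ⬝ᵥ ((Λ + M)⁻¹ *ᵥ w)) :=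
  abs_dotProduct_inv_mul_mulVec_le hΛ.posSemidef (hΛ.add_posSemidef hM)
    (le_add_of_nonneg_right hM.nonneg) w θ
end

section
/- Let p, k, n be natural numbers with 1 ≤ k ≤ p and n ≥ 1, let λ > 0, and set λ⊥ := n / (k · log(1 + n/λ)). Let Λ ∈ ℝ^{p×p} be the diagonal matrix whose first k diagonal entries equal λ and whose remaining p − k diagonal entries equal λ⊥. If w₁, …, w_n ∈ ℝ^p satisfy ‖w_s‖₂ ≤ 1 for all s, then log det(Λ + Σ_{s=1}^n w_s w_sᵀ) − log det Λ ≤ 2 k log(1 + n/λ). -/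
/-!
By Hadamard's inequality `det V ≤ ∏ Vᵢᵢ`, the log-determinant ratio is at most
`∑ᵢ log (1 + cᵢ / Λᵢᵢ)`, where `cᵢ = ∑ₛ wₛᵢ²` has total mass at most `n`. Each of the `k` head
coordinates contributes at most `log (1 + n / λ)`, and the tail coordinates together contribute
at most `∑ᵢ cᵢ / λ⊥ ≤ n / λ⊥ = k log (1 + n / λ)` since `log (1 + x) ≤ x`.
-/

open Matrix Finset

namespace Matrix

variable {n : Type*}

theorem diag_sum_vecMulVec_self {ι : Type*} [Fintype ι] (w : ι → n → ℝ) (i : n) :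
    (∑ s, vecMulVec (w s) (w s)) i i = ∑ s, w s i ^ 2 := by
  simp [sum_apply, vecMulVec_apply, sq]

variable [Fintype n] [DecidableEq n]

theorem PosSemidef.det_le_exp_trace_sub_card {A : Matrix n n ℝ} (hA : A.PosSemidef) :
    A.det ≤ Real.exp (A.trace - Fintype.card n) := by
  rw [hA.isHermitian.det_eq_prod_eigenvalues, hA.isHermitian.trace_eq_sum_eigenvalues]
  calc ∏ i, hA.isHermitian.eigenvalues i
      ≤ ∏ i, Real.exp (hA.isHermitian.eigenvalues i - 1) :=
        prod_le_prod (fun i _ => hA.eigenvalues_nonneg i)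
          fun i _ => by linarith [Real.add_one_le_exp (hA.isHermitian.eigenvalues i - 1)]
    _ = Real.exp (∑ i, hA.isHermitian.eigenvalues i - Fintype.card n) := by
        simp [← Real.exp_sum, sum_sub_distrib]

/-- **Hadamard's inequality**: after rescaling `A` to unit diagonal,
`det ≤ exp (trace - card) = 1`. -/
theorem PosDef.det_le_prod_diag {A : Matrix n n ℝ} (hA : A.PosDef) : A.det ≤ ∏ i, A i i := by
  set d : n → ℝ := fun i => Real.sqrt (A i i)⁻¹
  have hd : ∀ i, d i * d i = (A i i)⁻¹ := fun i => Real.mul_self_sqrt (inv_nonneg.2 hA.diag_pos.le)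
  have hB : (diagonal d * A * diagonal d).PosSemidef := by
    simpa using hA.posSemidef.conjTranspose_mul_mul_same (diagonal d)
  have htrace : (diagonal d * A * diagonal d).trace = Fintype.card n := by
    simp [trace, diagonal_mul, mul_diagonal, mul_right_comm _ (A _ _), hd, hA.diag_pos.ne']
  have hdet : (diagonal d * A * diagonal d).det = A.det / ∏ i, A i i := by
    rw [det_mul, det_mul, det_diagonal, div_eq_mul_inv, ← prod_inv_distrib]
    simp only [← hd, prod_mul_distrib]
    ring
  have := hB.det_le_exp_trace_sub_card
  rwa [htrace, sub_self, Real.exp_zero, hdet, div_le_one (prod_pos fun i _ => hA.diag_pos)] at this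

theorem log_det_diagonal_add_sub_le {d : n → ℝ} (hd : ∀ i, 0 < d i) {W : Matrix n n ℝ}
    (hW : W.PosSemidef) :
    Real.log (diagonal d + W).det - Real.log (diagonal d).det ≤
      ∑ i, Real.log (1 + W i i / d i) := by
  have hV : (diagonal d + W).PosDef := (PosDef.diagonal hd).add_posSemidef hW
  have hdW : ∀ i, 0 < d i + W i i := fun i => add_pos_of_pos_of_nonneg (hd i) hW.diag_nonneg
  calc Real.log (diagonal d + W).det - Real.log (diagonal d).det
      ≤ Real.log (∏ i, (d i + W i i)) - Real.log (∏ i, d i) := by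
        rw [det_diagonal]
        gcongr
        · exact hV.det_pos
        · simpa using hV.det_le_prod_diag
    _ = ∑ i, Real.log (1 + W i i / d i) := by
        rw [Real.log_prod fun i _ => (hdW i).ne', Real.log_prod fun i _ => (hd i).ne',
          ← sum_sub_distrib]
        refine sum_congr rfl fun i _ => ?_
        rw [← Real.log_div (hdW i).ne' (hd i).ne', add_div, div_self (hd i).ne']

end Matrix

theorem Real.log_one_add_le_self {x : ℝ} (hx : 0 ≤ x) : Real.log (1 + x) ≤ x := by
  linarith [Real.log_le_sub_one_of_pos (by positivity : 0 < 1 + x)]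

theorem Finset.sum_log_one_add_div_ite_le {ι : Type*} [Fintype ι] (P : ι → Prop) [DecidablePred P]
    {a b N : ℝ} (ha : 0 < a) (hb : 0 < b) {c : ι → ℝ} (hc : ∀ i, 0 ≤ c i) (hN : ∑ i, c i ≤ N) :
    ∑ i, Real.log (1 + c i / if P i then a else b) ≤
      #{i | P i} * Real.log (1 + N / a) + N / b := by
  have hterm : ∀ i, Real.log (1 + c i / if P i then a else b) ≤
      (if P i then Real.log (1 + N / a) else 0) + c i / b := by
    intro i
    have hci : 0 ≤ c i := hc i
    have hcN : c i ≤ N := (single_le_sum (fun j _ => hc j) (mem_univ i)).trans hN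
    split_ifs
    · have hhead : Real.log (1 + c i / a) ≤ Real.log (1 + N / a) := by gcongr
      linarith [div_nonneg hci hb.le]
    · simpa using Real.log_one_add_le_self (div_nonneg hci hb.le)
  calc ∑ i, Real.log (1 + c i / if P i then a else b)
      ≤ ∑ i, ((if P i then Real.log (1 + N / a) else 0) + c i / b) :=
        sum_le_sum fun i _ => hterm i
    _ = #{i | P i} * Real.log (1 + N / a) + (∑ i, c i) / b := by
        rw [Finset.sum_add_distrib, Finset.sum_div, Finset.sum_ite, Finset.sum_const, nsmul_eq_mul]
        simp
    _ ≤ #{i | P i} * Real.log (1 + N / a) + N / b := by gcongr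

theorem logdet_ratio_effective_dimension_general {p k n : ℕ}
    (hk : 1 ≤ k) (hn : 1 ≤ n) (lam : ℝ) (hlam : 0 < lam)
    (lamPerp : ℝ) (hlamPerp : lamPerp = (n : ℝ) / ((k : ℝ) * Real.log (1 + (n : ℝ) / lam)))
    (Λ : Matrix (Fin p) (Fin p) ℝ)
    (hΛ : Λ = Matrix.diagonal (fun i : Fin p => if (i : ℕ) < k then lam else lamPerp))
    (w : Fin n → Fin p → ℝ) (hw : ∀ s, Real.sqrt (∑ i, (w s i) ^ 2) ≤ 1) :
    Real.log (Λ + ∑ s, Matrix.vecMulVec (w s) (w s)).det - Real.log Λ.det ≤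
      2 * (k : ℝ) * Real.log (1 + (n : ℝ) / lam) := by
  set L := Real.log (1 + (n : ℝ) / lam)
  have hk0 : (0 : ℝ) < k := by exact_mod_cast hk
  have hn0 : (0 : ℝ) < n := by exact_mod_cast hn
  have hL : 0 < L := Real.log_pos (by simpa using div_pos hn0 hlam)
  have hlamPerp0 : 0 < lamPerp := by rw [hlamPerp]; positivity
  have hmass : ∑ i, ∑ s, w s i ^ 2 ≤ n := by
    rw [sum_comm]
    simpa using Finset.sum_le_sum fun s (_ : s ∈ Finset.univ) => Real.sqrt_le_one.mp (hw s)
  have hhead : (#{i : Fin p | (i : ℕ) < k} : ℝ) ≤ k := by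
    exact_mod_cast Fin.card_filter_val_lt.trans_le (min_le_right p k)
  have htail : (n : ℝ) / lamPerp = k * L := by
    rw [hlamPerp]; field_simp
  have hΛpos : ∀ i : Fin p, 0 < if (i : ℕ) < k then lam else lamPerp := fun i => by
    split_ifs <;> assumption
  have hW : (∑ s, vecMulVec (w s) (w s)).PosSemidef :=
    posSemidef_sum _ fun s _ => by simpa using posSemidef_vecMulVec_self_star (w s)
  subst hΛ
  calc _ ≤ ∑ i : Fin p, Real.log (1 + (∑ s, w s i ^ 2) / if (i : ℕ) < k then lam else lamPerp) := by
        simpa only [diag_sum_vecMulVec_self] using log_det_diagonal_add_sub_le hΛpos hW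
    _ ≤ #{i : Fin p | (i : ℕ) < k} * L + n / lamPerp :=
        Finset.sum_log_one_add_div_ite_le _ hlam hlamPerp0 (fun i => by positivity) hmass
    _ ≤ 2 * k * L := by rw [htail]; nlinarith

/-- Let `1 ≤ k ≤ p`, `n ≥ 1`, `λ > 0`, and `λ⊥ := n / (k ⬝ log(1 + n/λ))`. Let `Λ` be the
diagonal matrix whose first `k` diagonal entries equal `λ` and whose remaining `p − k`
entries equal `λ⊥`. If `w₁, …, w_n ∈ ℝ^p` satisfy `‖w_s‖₂ ≤ 1` for all `s`, then
`log det(Λ + Σ_s w_s w_sᵀ) − log det Λ ≤ 2 k log(1 + n/λ)`. -/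
theorem logdet_ratio_effective_dimension {p k n : ℕ}
    (hk : 1 ≤ k) (hkp : k ≤ p) (hn : 1 ≤ n) (lam : ℝ) (hlam : 0 < lam)
    (lamPerp : ℝ) (hlamPerp : lamPerp = (n : ℝ) / ((k : ℝ) * Real.log (1 + (n : ℝ) / lam)))
    (Λ : Matrix (Fin p) (Fin p) ℝ)
    (hΛ : Λ = Matrix.diagonal (fun i : Fin p => if (i : ℕ) < k then lam else lamPerp))
    (w : Fin n → Fin p → ℝ) (hw : ∀ s, Real.sqrt (∑ i, (w s i) ^ 2) ≤ 1) :
    Real.log (Λ + ∑ s, Matrix.vecMulVec (w s) (w s)).det - Real.log Λ.det ≤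
      2 * (k : ℝ) * Real.log (1 + (n : ℝ) / lam) :=
  logdet_ratio_effective_dimension_general hk hn lam hlam lamPerp hlamPerp Λ hΛ w hw
end
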